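/- arXiv:2504.05039 — 2 statements merged into one kernel-verified Lean document; each statement's English description precedes it below -/
import Mathlib

section
/- Let (C, 𝓗, 𝓚) be a cycle system where each member of 𝓗 induces a single run on C, 𝓗 is strict-containment free, and (C, 𝓗, 𝓚) is axax-free (both (C,𝓗) and (C,𝓚) are axax-free). Then there exists an outerplanar graph Q on vertex set 𝓗 whose outer cycle is C(𝓗) (the cycle in lex cyclic order) such that for every K ∈ 𝓚, the set {H ∈ 𝓗 : H ∩ K ≠ ∅} induces a connected subgraph of Q. -/
open scoped ENNReal

/-- A tree decomposition of a graph `G`: a tree `T` with bags `bag i ⊆ V` such that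
every vertex appears in a bag, every edge lies in a bag, and the bags containing a
fixed vertex form a connected subtree. -/
def IsTreeDecomp {V ι : Type} (G : SimpleGraph V) (T : SimpleGraph ι) (bag : ι → Set V) : Prop :=
  T.IsTree ∧ (∀ v, ∃ i, v ∈ bag i) ∧
    (∀ u v, G.Adj u v → ∃ i, u ∈ bag i ∧ v ∈ bag i) ∧
    (∀ v, (T.induce {i | v ∈ bag i}).Connected)

/-- Width of a tree decomposition: (max bag size) − 1. -/
noncomputable def decompWidth {V ι : Type} (bag : ι → Set V) : ℕ∞ :=
  (⨆ i, (bag i).encard) - 1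

/-- Treewidth: the infimum of widths of tree decompositions. -/
noncomputable def treewidth {V : Type} (G : SimpleGraph V) : ℕ∞ :=
  sInf {w : ℕ∞ | ∃ (ι : Type) (T : SimpleGraph ι) (bag : ι → Set V),
    IsTreeDecomp G T bag ∧ w = decompWidth bag}

/-- A family of vertex sets is non-piercing in `G` if every pairwise difference
(when nonempty) induces a connected subgraph of `G`. -/
def NonPiercing {V : Type} (G : SimpleGraph V) (F : Set (Set V)) : Prop :=
  ∀ H ∈ F, ∀ H' ∈ F, (H \ H').Nonempty → (G.induce (H \ H')).Connected

/-- Outerplanarity via a one-page (circular, non-crossing) layout. -/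
def Outerplanar {α : Type} (Q : SimpleGraph α) : Prop :=
  ∃ f : α → ℕ, Function.Injective f ∧
    ∀ a b c d : α, Q.Adj a b → Q.Adj c d →
      ¬ (f a < f c ∧ f c < f b ∧ f b < f d)

/-- `a, b, c` appear in this (clockwise) cyclic order on the cycle `Fin n`. -/
def Cyc3 {n : ℕ} (a b c : Fin n) : Prop :=
  (a < b ∧ b < c) ∨ (b < c ∧ c < a) ∨ (c < a ∧ a < b)

/-- `a, b, c, d` appear in this (clockwise) cyclic order on the cycle `Fin n`. -/
def Cyc4 {n : ℕ} (a b c d : Fin n) : Prop :=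
  (a < b ∧ b < c ∧ c < d) ∨ (b < c ∧ c < d ∧ d < a) ∨
    (c < d ∧ d < a ∧ a < b) ∨ (d < a ∧ a < b ∧ b < c)

/-- Open arc of vertices strictly between `u` and `v` clockwise. -/
def arcO {n : ℕ} (u v : Fin n) : Set (Fin n) := {w | Cyc3 u w v}

/-- Closed arc of vertices from `u` to `v` clockwise (inclusive). -/
def arcC {n : ℕ} (u v : Fin n) : Set (Fin n) := {u} ∪ {v} ∪ {w | Cyc3 u w v}

/-- The cycle system is `axax`-free. -/
def AxaxFree {n : ℕ} (F : Set (Set (Fin n))) : Prop :=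
  ¬ ∃ H ∈ F, ∃ H' ∈ F, ∃ a₁ x₁ a₂ x₂ : Fin n,
    Cyc4 a₁ x₁ a₂ x₂ ∧ a₁ ∈ H \ H' ∧ a₂ ∈ H \ H' ∧ x₁ ∈ H' ∧ x₂ ∈ H'

/-- The cycle system is `abab`-free. -/
def AbabFree {n : ℕ} (F : Set (Set (Fin n))) : Prop :=
  ¬ ∃ H ∈ F, ∃ H' ∈ F, ∃ a₁ b₁ a₂ b₂ : Fin n,
    Cyc4 a₁ b₁ a₂ b₂ ∧ a₁ ∈ H \ H' ∧ a₂ ∈ H \ H' ∧ b₁ ∈ H' \ H ∧ b₂ ∈ H' \ H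

/-- The vertices appearing in bags of the component of `T` minus the edge `{x,y}`
that contains `x` (the `x`-side of the tree decomposition). -/
def sideVerts {V ι : Type} (T : SimpleGraph ι) (bag : ι → Set V) (x y : ι) : Set V :=
  ⋃ i ∈ {i | (T.deleteEdges {s(x, y)}).Reachable x i}, bag i

/-- Adjacency in the `N × N` grid graph. -/
def gridAdj {N : ℕ} (p q : Fin N × Fin N) : Prop :=
  (p.1 = q.1 ∧ (p.2.val + 1 = q.2.val ∨ q.2.val + 1 = p.2.val)) ∨
    (p.2 = q.2 ∧ (p.1.val + 1 = q.1.val ∨ q.1.val + 1 = p.1.val))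

/-- Clockwise distance from `b` to `a` on the cycle `Fin n`. -/
def relpos {n : ℕ} (a b : Fin n) : ℕ := (a.val + n - b.val) % n

/-- Lexicographic comparison on pairs of naturals. -/
def lexLe (p q : ℕ × ℕ) : Prop := p.1 < q.1 ∨ (p.1 = q.1 ∧ p.2 ≤ q.2)

/-- A set of indices forming a (possibly empty) cyclic interval of `Fin m`. -/
def CycInterval {m : ℕ} (S : Set (Fin m)) : Prop := S = ∅ ∨ ∃ i j : Fin m, S = arcC i j

/-- Maximal elements of a family of sets under inclusion. -/
def maxElems {X : Type} (F : Set (Set X)) : Set (Set X) :=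
  {H ∈ F | ∀ H' ∈ F, H ⊆ H' → H = H'}

/-!
Index the runs by `Fin m` in their lexicographic order, so that `C(𝓗)` is the cycle
`k ↦ k + 1`, and trace each `K ∈ 𝓚` to the set of runs it meets. Because the runs are sorted
and no run lies strictly inside another, runs `i₁, i₂, i₃, i₄` in cyclic order carrying points
`y₁, y₂, y₃, y₄`, where `y₂` and `y₄` avoid the runs `i₁` and `i₃`, have these points in the same
cyclic order. So an `axax` pattern of two traces lifts to one of two members of `𝓚`, and the
traces form an axax-free family on the cycle `Fin m`.

Such a family has a non-crossing support containing the cycle. Choose a gap `(u, v)` of a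
member with the fewest, but at least one, cycle vertices strictly inside; delete those
vertices, recurse, and add back the cycle edges. By minimality, consecutive points of a member
inside the gap are adjacent on the cycle; and a member with points on both sides of the gap
contains `u` or `v` (otherwise it forms an `axax` pattern with the member owning the gap), which
is adjacent on the cycle to its first or last point inside.
-/

section CyclicOrder

variable {n : ℕ}

lemma relpos_lt (a b : Fin n) : relpos a b < n := Nat.mod_lt _ b.pos

lemma relpos_spec (a b : Fin n) :
    (b.val ≤ a.val ∧ relpos a b + b.val = a.val) ∨
      (a.val < b.val ∧ relpos a b + b.val = a.val + n) := by
  have ha := a.isLt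
  unfold relpos
  rcases le_or_gt b.val a.val with h | h
  · rw [show a.val + n - b.val = a.val - b.val + n by omega, Nat.add_mod_right,
      Nat.mod_eq_of_lt (by omega)]
    omega
  · rw [Nat.mod_eq_of_lt (by omega)]
    omega

lemma relpos_eq_zero_iff {a b : Fin n} : relpos a b = 0 ↔ a = b := by
  have := relpos_spec a b
  rw [Fin.ext_iff]
  omega

@[simp]
lemma relpos_self (a : Fin n) : relpos a a = 0 := relpos_eq_zero_iff.2 rfl

lemma relpos_add_relpos (x y z : Fin n) :
    relpos x z = relpos x y + relpos y z ∨ relpos x z + n = relpos x y + relpos y z := by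
  rcases relpos_spec x y with h₁ | h₁ <;> rcases relpos_spec y z with h₂ | h₂ <;>
    rcases relpos_spec x z with h₃ | h₃ <;> omega

lemma relpos_left_injective (b : Fin n) : Function.Injective (relpos · b) := by
  intro x y h
  have := relpos_spec x b
  have := relpos_spec y b
  simp only at h
  ext
  omega

lemma not_cyc3_self_left (a b : Fin n) : ¬ Cyc3 a a b := by
  simp only [Cyc3, Fin.lt_def]
  omega

lemma not_cyc3_self_right (a b : Fin n) : ¬ Cyc3 a b b := by
  simp only [Cyc3, Fin.lt_def]
  omega

lemma Cyc3.rotate {a b c : Fin n} (h : Cyc3 a b c) : Cyc3 b c a := by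
  unfold Cyc3 at *
  tauto

lemma Cyc4.rotate {a b c d : Fin n} (h : Cyc4 a b c d) : Cyc4 b c d a := by
  unfold Cyc4 at *
  tauto

lemma cyc4_iff_cyc3_and_cyc3 {a b c d : Fin n} : Cyc4 a b c d ↔ Cyc3 a b c ∧ Cyc3 c d a := by
  simp only [Cyc4, Cyc3, Fin.lt_def]
  omega

lemma cyc3_iff_relpos (a b c : Fin n) :
    Cyc3 a b c ↔ 0 < relpos b a ∧ relpos b a < relpos c a := by
  have := relpos_spec b a
  have := relpos_spec c a
  simp only [Cyc3, Fin.lt_def]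
  omega

lemma mem_arcO_iff_relpos {z u v : Fin n} :
    z ∈ arcO u v ↔ 0 < relpos z u ∧ relpos z u < relpos v u :=
  cyc3_iff_relpos u z v

lemma cyc3_iff_of_relpos_lt {x z w : Fin n} (b : Fin n) (h : relpos x b < relpos w b) :
    Cyc3 x z w ↔ relpos x b < relpos z b ∧ relpos z b < relpos w b := by
  rw [cyc3_iff_relpos]
  have := relpos_add_relpos z x b
  have := relpos_add_relpos w x b
  have := relpos_lt z x
  have := relpos_lt w x
  have := relpos_lt z b
  have := relpos_lt w b
  omega

lemma cyc4_of_relpos_lt {x₁ x₂ x₃ x₄ : Fin n} (b : Fin n)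
    (h : relpos x₁ b < relpos x₂ b ∧ relpos x₂ b < relpos x₃ b ∧ relpos x₃ b < relpos x₄ b) :
    Cyc4 x₁ x₂ x₃ x₄ :=
  cyc4_iff_cyc3_and_cyc3.2
    ⟨(cyc3_iff_of_relpos_lt b (h.1.trans h.2.1)).2 ⟨h.1, h.2.1⟩,
      ((cyc3_iff_of_relpos_lt b (by omega)).2 ⟨by omega, h.2.2⟩).rotate⟩

lemma not_cyc3_add_one [NeZero n] (k z : Fin n) : ¬ Cyc3 k z (k + 1) := by
  obtain ⟨n, rfl⟩ := Nat.exists_eq_succ_of_ne_zero (NeZero.ne n)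
  have := z.isLt
  simp only [Cyc3, Fin.lt_def, Fin.val_add_one]
  split_ifs with h
  · simp only [Fin.ext_iff, Fin.val_last] at h
    omega
  · omega

lemma mem_arcC_iff_relpos {x u v : Fin n} : x ∈ arcC u v ↔ relpos x u ≤ relpos v u := by
  have := relpos_spec x u
  have := relpos_spec v u
  simp only [arcC, Set.mem_union, Set.mem_singleton_iff, Set.mem_ofPred_eq, cyc3_iff_relpos,
    Fin.ext_iff]
  omega

end CyclicOrder

lemma AxaxFree.image_sdiff {n : ℕ} {F : Set (Set (Fin n))} (hF : AxaxFree F) (A : Set (Fin n)) :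
    AxaxFree ((· \ A) '' F) := by
  rintro ⟨_, ⟨T, hT, rfl⟩, _, ⟨T', hT', rfl⟩, a₁, x₁, a₂, x₂, h, ha₁, ha₂, hx₁, hx₂⟩
  exact hF ⟨T, hT, T', hT', a₁, x₁, a₂, x₂, h, ⟨ha₁.1.1, fun h' => ha₁.2 ⟨h', ha₁.1.2⟩⟩,
    ⟨ha₂.1.1, fun h' => ha₂.2 ⟨h', ha₂.1.2⟩⟩, hx₁.1, hx₂.1⟩

lemma SimpleGraph.preconnected_induce_sup {V : Type*} {G H : SimpleGraph V} {T A : Set V}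
    (hG : (G.induce (T \ A)).Preconnected) (hH : (H.induce (T ∩ A)).Preconnected)
    (hbridge : (T \ A).Nonempty → (T ∩ A).Nonempty → ∃ a ∈ T \ A, ∃ c ∈ T ∩ A, H.Adj a c) :
    ((G ⊔ H).induce T).Preconnected := by
  replace hG := hG.mono (comap_monotone _ (le_sup_left : G ≤ G ⊔ H))
  replace hH := hH.mono (comap_monotone _ (le_sup_right : H ≤ G ⊔ H))
  rw [← Set.sdiff_union_inter T A]
  rcases (T \ A).eq_empty_or_nonempty with hout | hout
  · rwa [hout, Set.empty_union]
  rcases (T ∩ A).eq_empty_or_nonempty with hin | hin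
  · rwa [hin, Set.union_empty]
  obtain ⟨a, ha, c, hc, hac⟩ := hbridge hout hin
  exact (connected_induce_union hG hH ha hc (.inr hac)).preconnected

section Support

variable {m : ℕ}

def IsNextIn (S : Set (Fin m)) (u v : Fin m) : Prop :=
  u ∈ S ∧ v ∈ S ∧ u ≠ v ∧ ∀ z ∈ S, ¬ Cyc3 u z v

def cycleOn (U : Set (Fin m)) : SimpleGraph (Fin m) := SimpleGraph.fromRel (IsNextIn U)

def NonCrossing (Q : SimpleGraph (Fin m)) : Prop :=
  ∀ a b c d, Q.Adj a b → Q.Adj c d → ¬ Cyc4 a c b d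

lemma IsNextIn.cycleOn_adj {U : Set (Fin m)} {u v : Fin m} (h : IsNextIn U u v) :
    (cycleOn U).Adj u v :=
  (SimpleGraph.fromRel_adj _ _ _).2 ⟨h.2.2.1, .inl h⟩

lemma support_cycleOn_subset (U : Set (Fin m)) : (cycleOn U).support ⊆ U := by
  rintro a ⟨b, -, h | h⟩
  exacts [h.1, h.2.1]

lemma support_sup_cycleOn_subset {Q : SimpleGraph (Fin m)} {U : Set (Fin m)}
    (hQU : Q.support ⊆ U) : (Q ⊔ cycleOn U).support ⊆ U := by
  rintro a ⟨b, hab | hab⟩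
  exacts [hQU ⟨b, hab⟩, support_cycleOn_subset U ⟨b, hab⟩]

lemma cycleOn_adj_not_cyc4 {U : Set (Fin m)} {a b c d : Fin m} (hab : (cycleOn U).Adj a b)
    (hc : c ∈ U) (hd : d ∈ U) : ¬ Cyc4 a c b d := by
  intro h
  obtain ⟨hacb, hbda⟩ := cyc4_iff_cyc3_and_cyc3.1 h
  rcases hab.2 with h' | h'
  exacts [h'.2.2.2 c hc hacb, h'.2.2.2 d hd hbda]

lemma nonCrossing_cycleOn (U : Set (Fin m)) : NonCrossing (cycleOn U) :=
  fun _ _ c d hab hcd => cycleOn_adj_not_cyc4 hab (support_cycleOn_subset U ⟨d, hcd⟩)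
    (support_cycleOn_subset U ⟨c, hcd.symm⟩)

lemma NonCrossing.sup_cycleOn {Q : SimpleGraph (Fin m)} {U : Set (Fin m)} (hQ : NonCrossing Q)
    (hQU : Q.support ⊆ U) : NonCrossing (Q ⊔ cycleOn U) := by
  intro a b c d hab hcd h
  have hU := support_sup_cycleOn_subset hQU
  rcases hab with hab | hab
  · rcases hcd with hcd | hcd
    · exact hQ a b c d hab hcd h
    · exact cycleOn_adj_not_cyc4 hcd (hQU ⟨a, hab.symm⟩) (hQU ⟨b, hab⟩) h.rotate
  · exact cycleOn_adj_not_cyc4 hab (hU ⟨d, hcd⟩) (hU ⟨c, hcd.symm⟩) h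

lemma preconnected_induce_of_adj_of_relpos_lt {Q : SimpleGraph (Fin m)} {S : Set (Fin m)}
    (b : Fin m) (h : ∀ a c, IsNextIn S a c → relpos a b < relpos c b → Q.Adj a c) :
    (Q.induce S).Preconnected := by
  rintro ⟨x, hx⟩ ⟨y, hy⟩
  obtain ⟨x₀, hx₀, hmin⟩ := Set.exists_min_image S (relpos · b) (Set.toFinite _) ⟨x, hx⟩
  suffices reach : ∀ k, ∀ z (hz : z ∈ S), relpos z b = k →
      (Q.induce S).Reachable ⟨x₀, hx₀⟩ ⟨z, hz⟩ from
    (reach _ x hx rfl).symm.trans (reach _ y hy rfl)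
  intro k
  induction k using Nat.strong_induction_on with
  | _ k ih =>
    intro z hz hzk
    rcases eq_or_ne z x₀ with rfl | hzx₀
    · rfl
    have hlt : relpos x₀ b < relpos z b :=
      (hmin z hz).lt_of_ne fun h' => hzx₀ (relpos_left_injective b h').symm
    obtain ⟨p, ⟨hp, hpz⟩, hmax⟩ := Set.exists_max_image {p ∈ S | relpos p b < relpos z b}
      (relpos · b) (Set.toFinite _) ⟨x₀, hx₀, hlt⟩
    have hnext : IsNextIn S p z := ⟨hp, hz, fun h' => by simp [h'] at hpz, fun w hw hpwz => by
      rw [cyc3_iff_of_relpos_lt b hpz] at hpwz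
      exact absurd (hmax w ⟨hw, hpwz.2⟩) (not_le.2 hpwz.1)⟩
    exact (ih _ (hzk ▸ hpz) p hp rfl).trans
      (SimpleGraph.Adj.reachable (G := Q.induce S) (h p z hnext hpz))

lemma preconnected_induce_of_isNextIn_adj {Q : SimpleGraph (Fin m)} {S : Set (Fin m)}
    (h : ∀ a c, IsNextIn S a c → Q.Adj a c) : (Q.induce S).Preconnected := by
  rintro ⟨x, hx⟩
  exact preconnected_induce_of_adj_of_relpos_lt x (fun a c hac _ => h a c hac) ⟨x, hx⟩

end Support

section MinimalGap

variable {m : ℕ} {U : Set (Fin m)} {F : Set (Set (Fin m))} {u v : Fin m}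

def IsMinimalGap (U : Set (Fin m)) (F : Set (Set (Fin m))) (u v : Fin m) : Prop :=
  ∀ T ∈ F, ∀ p q, IsNextIn T p q → (U ∩ arcO p q).Nonempty →
    (U ∩ arcO u v).ncard ≤ (U ∩ arcO p q).ncard

lemma exists_isMinimalGap (h : ∃ T ∈ F, ∃ p q, IsNextIn T p q ∧ (U ∩ arcO p q).Nonempty) :
    ∃ T₀ ∈ F, ∃ u v, IsNextIn T₀ u v ∧ (U ∩ arcO u v).Nonempty ∧ IsMinimalGap U F u v := by
  obtain ⟨T, hT, p, q, hpq, hne⟩ := h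
  obtain ⟨⟨T₀, u, v⟩, ⟨hT₀, huv, hne₀⟩, hmin⟩ := Set.exists_min_image
    {g : Set (Fin m) × Fin m × Fin m | g.1 ∈ F ∧ IsNextIn g.1 g.2.1 g.2.2 ∧
      (U ∩ arcO g.2.1 g.2.2).Nonempty}
    (fun g => (U ∩ arcO g.2.1 g.2.2).ncard) (Set.toFinite _) ⟨(T, p, q), hT, hpq, hne⟩
  exact ⟨T₀, hT₀, u, v, huv, hne₀, fun T hT p q hpq hne => hmin (T, p, q) ⟨hT, hpq, hne⟩⟩

/-- Otherwise `p` and `q` would bound a gap of `T` with fewer points of `U` inside than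
`(u, v)`. -/
lemma IsMinimalGap.isNextIn (hmin : IsMinimalGap U F u v) {T : Set (Fin m)} (hT : T ∈ F)
    (hTU : T ⊆ U) {p q : Fin m} (hp : p ∈ T) (hq : q ∈ T) (hpq : relpos p u < relpos q u)
    (hqv : relpos q u ≤ relpos v u) (hend : p ∈ arcO u v ∨ q ∈ arcO u v)
    (hfree : ∀ z ∈ T ∩ arcO u v, ¬ (relpos p u < relpos z u ∧ relpos z u < relpos q u)) :
    IsNextIn U p q := by
  have hsub : U ∩ arcO p q ⊆ U ∩ arcO u v := fun z ⟨hzU, hz⟩ => by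
    have := (cyc3_iff_of_relpos_lt u hpq).1 hz
    exact ⟨hzU, mem_arcO_iff_relpos.2 ⟨by omega, by omega⟩⟩
  have hne : p ≠ q := fun h => by simp [h] at hpq
  have hTpq : IsNextIn T p q := ⟨hp, hq, hne, fun z hz hpzq =>
    hfree z ⟨hz, (hsub ⟨hTU hz, hpzq⟩).2⟩ ((cyc3_iff_of_relpos_lt u hpq).1 hpzq)⟩
  refine ⟨hTU hp, hTU hq, hne, fun z hz hpzq => ?_⟩
  have hlt : (U ∩ arcO p q).ncard < (U ∩ arcO u v).ncard := by
    refine Set.ncard_lt_ncard ⟨hsub, fun hsup => ?_⟩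
    rcases hend with h | h
    · exact not_cyc3_self_left p q (hsup ⟨hTU hp, h⟩).2
    · exact not_cyc3_self_right p q (hsup ⟨hTU hq, h⟩).2
  exact (hmin T hT p q hTpq ⟨z, hz, hpzq⟩).not_gt hlt

lemma IsMinimalGap.preconnected_inter (hmin : IsMinimalGap U F u v) {T : Set (Fin m)}
    (hT : T ∈ F) (hTU : T ⊆ U) : ((cycleOn U).induce (T ∩ arcO u v)).Preconnected := by
  refine preconnected_induce_of_adj_of_relpos_lt u fun a c hac hlt => IsNextIn.cycleOn_adj ?_
  refine hmin.isNextIn hT hTU hac.1.1 hac.2.1.1 hlt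
    (mem_arcO_iff_relpos.1 hac.2.1.2).2.le (.inl hac.1.2) fun z hz hazc => ?_
  exact hac.2.2.2 z hz ((cyc3_iff_of_relpos_lt u hlt).2 hazc)

/-- `T` contains `u` or `v`, since otherwise `T₀` and `T` form an `axax` pattern. -/
lemma IsMinimalGap.exists_bridge (hF : AxaxFree F) (hmin : IsMinimalGap U F u v)
    {T₀ : Set (Fin m)} (hT₀ : T₀ ∈ F) (huv : IsNextIn T₀ u v) {T : Set (Fin m)} (hT : T ∈ F)
    (hTU : T ⊆ U) (hout : (T \ arcO u v).Nonempty) (hin : (T ∩ arcO u v).Nonempty) :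
    ∃ a ∈ T \ arcO u v, ∃ c ∈ T ∩ arcO u v, (cycleOn U).Adj a c := by
  obtain ⟨x, hx, hxmin⟩ := Set.exists_min_image _ (relpos · u) (Set.toFinite _) hin
  obtain ⟨y, hy, hymax⟩ := Set.exists_max_image _ (relpos · u) (Set.toFinite _) hin
  have hxI := mem_arcO_iff_relpos.1 hx.2
  have hyI := mem_arcO_iff_relpos.1 hy.2
  by_cases hu : u ∈ T
  · refine ⟨u, ⟨hu, not_cyc3_self_left u v⟩, x, hx, IsNextIn.cycleOn_adj ?_⟩
    refine hmin.isNextIn hT hTU hu hx.1 (by simpa using hxI.1) hxI.2.le (.inr hx.2)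
      fun z hz hzx => ?_
    exact absurd (hxmin z hz) (not_le.2 hzx.2)
  by_cases hv : v ∈ T
  · refine ⟨v, ⟨hv, not_cyc3_self_right u v⟩, y, hy, IsNextIn.cycleOn_adj ?_ |>.symm⟩
    refine hmin.isNextIn hT hTU hy.1 hv hyI.2 le_rfl (.inl hy.2) fun z hz hyz => ?_
    exact absurd (hymax z hz) (not_le.2 hyz.1)
  obtain ⟨p, hp, hpI⟩ := hout
  have hpu : relpos p u ≠ 0 := fun h => hu (relpos_eq_zero_iff.1 h ▸ hp)
  have hpv : relpos p u ≠ relpos v u := fun h => hv (relpos_left_injective u h ▸ hp)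
  have hvp : relpos v u < relpos p u := by
    rw [mem_arcO_iff_relpos] at hpI
    omega
  have hcyc : Cyc4 u x v p := cyc4_of_relpos_lt u (by simpa using ⟨hxI.1, hxI.2, hvp⟩)
  exact absurd ⟨T₀, hT₀, T, hT, u, x, v, p, hcyc, ⟨huv.1, hu⟩, ⟨huv.2.1, hv⟩, hx.1, hp⟩ hF

end MinimalGap

theorem exists_nonCrossing_support {m : ℕ} (U : Set (Fin m)) (F : Set (Set (Fin m)))
    (hFU : ∀ T ∈ F, T ⊆ U) (hF : AxaxFree F) :
    ∃ Q : SimpleGraph (Fin m), Q.support ⊆ U ∧ NonCrossing Q ∧ cycleOn U ≤ Q ∧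
      ∀ T ∈ F, (Q.induce T).Preconnected := by
  induction hN : U.ncard using Nat.strong_induction_on generalizing U F with
  | _ N ih =>
  by_cases hgap : ∃ T ∈ F, ∃ p q, IsNextIn T p q ∧ (U ∩ arcO p q).Nonempty
  · obtain ⟨T₀, hT₀, u, v, huv, hne, hmin⟩ := exists_isMinimalGap hgap
    have hlt : (U \ arcO u v).ncard < N :=
      hN ▸ Set.ncard_lt_ncard (Set.sdiff_ssubset_left_iff.2 hne)
    obtain ⟨Q, hQU, hQ, -, hQF⟩ := ih _ hlt (U \ arcO u v) ((· \ arcO u v) '' F)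
      (by rintro _ ⟨T, hT, rfl⟩; exact Set.sdiff_subset_sdiff_left (hFU T hT))
      (hF.image_sdiff _) rfl
    refine ⟨Q ⊔ cycleOn U, support_sup_cycleOn_subset (hQU.trans Set.sdiff_subset),
      hQ.sup_cycleOn (hQU.trans Set.sdiff_subset), le_sup_right, fun T hT => ?_⟩
    exact SimpleGraph.preconnected_induce_sup (hQF _ ⟨T, hT, rfl⟩)
      (hmin.preconnected_inter hT (hFU T hT)) (hmin.exists_bridge hF hT₀ huv hT (hFU T hT))
  · refine ⟨cycleOn U, support_cycleOn_subset U, nonCrossing_cycleOn U, le_rfl, fun T hT => ?_⟩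
    refine preconnected_induce_of_isNextIn_adj fun a c hac => IsNextIn.cycleOn_adj ?_
    exact ⟨hFU T hT hac.1, hFU T hT hac.2.1, hac.2.2.1,
      fun z hz hazc => hgap ⟨T, hT, a, c, hac, z, hz, hazc⟩⟩

/-- Position `p` lies on the arc of length `l` starting at position `a`, positions being taken
modulo `n`. -/
def InArc (n a l p : ℕ) : Prop := (a ≤ p ∧ p ≤ a + l) ∨ p + n ≤ a + l

def NotStrictlyInside (n a l a' l' : ℕ) : Prop :=
  ¬ (a' < a ∧ a + l < a' + l') ∧ ¬ (a < a' ∧ a + l + n < a' + l')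

lemma mem_arcC_iff_inArc {n : ℕ} {x u v : Fin n} (b : Fin n) :
    x ∈ arcC u v ↔ InArc n (relpos u b) (relpos v u) (relpos x b) := by
  rw [mem_arcC_iff_relpos, InArc]
  have := relpos_add_relpos x u b
  have := relpos_lt x u
  have := relpos_lt u b
  have := relpos_lt x b
  have := relpos_lt v u
  omega

lemma notStrictlyInside_of_relpos {n : ℕ} {u t u' t' : Fin n}
    (h : ¬ (0 < relpos u u' ∧ relpos u u' ≤ relpos t u' ∧ relpos t u' < relpos t' u')) (b : Fin n) :
    NotStrictlyInside n (relpos u b) (relpos t u) (relpos u' b) (relpos t' u') := by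
  unfold NotStrictlyInside
  have := relpos_add_relpos u u' b
  have := relpos_add_relpos t u u'
  have := relpos_lt u u'
  have := relpos_lt t u
  have := relpos_lt t u'
  have := relpos_lt t' u'
  have := relpos_lt u b
  have := relpos_lt u' b
  omega

/-- Positions are measured from the start of the first arc; `h₂₃` and `h₃₄` say that the arcs
follow each other in cyclic lexicographic order, the fourth possibly tying with the first from
before. -/
lemma ordered_of_interleaved_arcs {n a₂ a₃ a₄ l₁ l₂ l₃ l₄ y₁ y₂ y₃ y₄ : ℕ} (hy₄n : y₄ < n)
    (h₂₃ : a₂ ≤ a₃ ∧ (a₂ = a₃ → l₂ ≤ l₃)) (h₃₄ : a₃ ≤ a₄ ∨ (a₄ = 0 ∧ l₄ ≤ l₁))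
    (h₁₄ : NotStrictlyInside n 0 l₁ a₄ l₄) (h₃₂ : NotStrictlyInside n a₃ l₃ a₂ l₂)
    (hy₁ : InArc n 0 l₁ y₁) (hy₂ : InArc n a₂ l₂ y₂) (hy₂₁ : ¬ InArc n 0 l₁ y₂)
    (hy₂₃ : ¬ InArc n a₃ l₃ y₂) (hy₃ : InArc n a₃ l₃ y₃) (hy₄ : InArc n a₄ l₄ y₄)
    (hy₄₁ : ¬ InArc n 0 l₁ y₄) (hy₄₃ : ¬ InArc n a₃ l₃ y₄) :
    y₁ < y₂ ∧ y₂ < y₃ ∧ y₃ < y₄ := by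
  simp only [InArc, NotStrictlyInside] at *
  omega

section Runs

variable {m n : ℕ}

def LexSortedRuns (s t : Fin m → Fin n) : Prop :=
  ∀ k l : Fin m, k < l → lexLe ((s k).val, relpos (t k) (s k)) ((s l).val, relpos (t l) (s l))

def StrictContainmentFree (s t : Fin m → Fin n) : Prop :=
  ∀ k l : Fin m, ¬ (0 < relpos (s k) (s l) ∧ relpos (s k) (s l) ≤ relpos (t k) (s l) ∧
    relpos (t k) (s l) < relpos (t l) (s l))

variable {s t : Fin m → Fin n}

lemma cyc4_of_mem_arcC_of_lt (hsort : LexSortedRuns s t) (hscf : StrictContainmentFree s t)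
    {i₁ i₂ i₃ i₄ : Fin m} (h₁₂ : i₁ < i₂) (h₂₃ : i₂ < i₃) (h₃₄ : i₃ < i₄ ∨ i₄ < i₁)
    {y₁ y₂ y₃ y₄ : Fin n} (hy₁ : y₁ ∈ arcC (s i₁) (t i₁))
    (hy₂ : y₂ ∈ arcC (s i₂) (t i₂) \ (arcC (s i₁) (t i₁) ∪ arcC (s i₃) (t i₃)))
    (hy₃ : y₃ ∈ arcC (s i₃) (t i₃))
    (hy₄ : y₄ ∈ arcC (s i₄) (t i₄) \ (arcC (s i₁) (t i₁) ∪ arcC (s i₃) (t i₃))) :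
    Cyc4 y₁ y₂ y₃ y₄ := by
  simp only [Set.mem_sdiff, Set.mem_union, not_or, mem_arcC_iff_inArc (s i₁), relpos_self]
    at hy₁ hy₂ hy₃ hy₄
  have h₁₄ := notStrictlyInside_of_relpos (hscf i₁ i₄) (s i₁)
  rw [relpos_self] at h₁₄
  have hsorted₂₃ : relpos (s i₂) (s i₁) ≤ relpos (s i₃) (s i₁) ∧
      (relpos (s i₂) (s i₁) = relpos (s i₃) (s i₁) →
        relpos (t i₂) (s i₂) ≤ relpos (t i₃) (s i₃)) := by
    have := relpos_spec (s i₂) (s i₁)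
    have := relpos_spec (s i₃) (s i₁)
    have := hsort _ _ h₁₂
    have := hsort _ _ h₂₃
    simp only [lexLe] at *
    omega
  have hsorted₃₄ : relpos (s i₃) (s i₁) ≤ relpos (s i₄) (s i₁) ∨
      (relpos (s i₄) (s i₁) = 0 ∧ relpos (t i₄) (s i₄) ≤ relpos (t i₁) (s i₁)) := by
    have := relpos_spec (s i₃) (s i₁)
    have := relpos_spec (s i₄) (s i₁)
    have := hsort _ _ (h₁₂.trans h₂₃)
    rcases h₃₄ with h | h <;> have := hsort _ _ h <;> simp only [lexLe] at * <;> omega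
  exact cyc4_of_relpos_lt (s i₁) <| ordered_of_interleaved_arcs (relpos_lt _ _) hsorted₂₃
    hsorted₃₄ h₁₄ (notStrictlyInside_of_relpos (hscf i₃ i₂) _) hy₁ hy₂.1 hy₂.2.1 hy₂.2.2 hy₃
    hy₄.1 hy₄.2.1 hy₄.2.2

lemma cyc4_of_mem_arcC (hsort : LexSortedRuns s t) (hscf : StrictContainmentFree s t)
    {i₁ i₂ i₃ i₄ : Fin m} (hi : Cyc4 i₁ i₂ i₃ i₄)
    {y₁ y₂ y₃ y₄ : Fin n} (hy₁ : y₁ ∈ arcC (s i₁) (t i₁))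
    (hy₂ : y₂ ∈ arcC (s i₂) (t i₂) \ (arcC (s i₁) (t i₁) ∪ arcC (s i₃) (t i₃)))
    (hy₃ : y₃ ∈ arcC (s i₃) (t i₃))
    (hy₄ : y₄ ∈ arcC (s i₄) (t i₄) \ (arcC (s i₁) (t i₁) ∪ arcC (s i₃) (t i₃))) :
    Cyc4 y₁ y₂ y₃ y₄ := by
  rcases hi with ⟨h₁₂, h₂₃, h₃₄⟩ | ⟨h₂₃, h₃₄, h₄₁⟩ | ⟨h₃₄, h₄₁, h₁₂⟩ | ⟨h₄₁, h₁₂, h₂₃⟩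
  · exact cyc4_of_mem_arcC_of_lt hsort hscf h₁₂ h₂₃ (.inl h₃₄) hy₁ hy₂ hy₃ hy₄
  · rw [Set.union_comm] at hy₂ hy₄
    exact (cyc4_of_mem_arcC_of_lt hsort hscf h₃₄ h₄₁ (.inr h₂₃) hy₃ hy₄ hy₁ hy₂).rotate.rotate
  · rw [Set.union_comm] at hy₂ hy₄
    exact (cyc4_of_mem_arcC_of_lt hsort hscf h₃₄ h₄₁ (.inl h₁₂) hy₃ hy₄ hy₁ hy₂).rotate.rotate
  · exact cyc4_of_mem_arcC_of_lt hsort hscf h₁₂ h₂₃ (.inr h₄₁) hy₁ hy₂ hy₃ hy₄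

lemma axaxFree_image_trace (hsort : LexSortedRuns s t) (hscf : StrictContainmentFree s t)
    {𝓚 : Set (Set (Fin n))} (h𝓚 : AxaxFree 𝓚) :
    AxaxFree ((fun K => {k : Fin m | (arcC (s k) (t k) ∩ K).Nonempty}) '' 𝓚) := by
  rintro ⟨_, ⟨K, hK, rfl⟩, _, ⟨K', hK', rfl⟩, i₁, i₂, i₃, i₄, hi, ⟨⟨y₁, hy₁, hy₁K⟩, hi₁⟩,
    ⟨⟨y₃, hy₃, hy₃K⟩, hi₃⟩, ⟨y₂, hy₂, hy₂K'⟩, ⟨y₄, hy₄, hy₄K'⟩⟩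
  have avoid : ∀ {y}, y ∈ K' → y ∉ arcC (s i₁) (t i₁) ∪ arcC (s i₃) (t i₃) :=
    fun hy h => h.elim (fun h => hi₁ ⟨_, h, hy⟩) (fun h => hi₃ ⟨_, h, hy⟩)
  refine h𝓚 ⟨K, hK, K', hK', y₁, y₂, y₃, y₄, ?_, ⟨hy₁K, fun h => hi₁ ⟨y₁, hy₁, h⟩⟩,
    ⟨hy₃K, fun h => hi₃ ⟨y₃, hy₃, h⟩⟩, hy₂K', hy₄K'⟩
  exact cyc4_of_mem_arcC hsort hscf hi hy₁ ⟨hy₂, avoid hy₂K'⟩ hy₃ ⟨hy₄, avoid hy₄K'⟩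

end Runs

theorem stmt14_general (n m : ℕ) [NeZero m] (e : Fin m → Set (Fin n))
    (s t : Fin m → Fin n) (hrun : ∀ k, e k = arcC (s k) (t k))
    (hsort : ∀ k l : Fin m, k < l →
      lexLe ((s k).val, relpos (t k) (s k)) ((s l).val, relpos (t l) (s l)))
    (hscf : ∀ k l : Fin m, ¬ (0 < relpos (s k) (s l) ∧
      relpos (s k) (s l) ≤ relpos (t k) (s l) ∧
      relpos (t k) (s l) < relpos (t l) (s l)))
    (𝓚 : Set (Set (Fin n)))
    (haxK : AxaxFree 𝓚) :
    ∃ Q : SimpleGraph (Fin m),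
      (∀ k : Fin m, k ≠ k + 1 → Q.Adj k (k + 1)) ∧
      (∀ a b c d : Fin m, Q.Adj a b → Q.Adj c d → ¬ Cyc4 a c b d) ∧
      ∀ K ∈ 𝓚, {k : Fin m | (e k ∩ K).Nonempty}.Nonempty →
        (Q.induce {k : Fin m | (e k ∩ K).Nonempty}).Connected := by
  obtain rfl : e = fun k => arcC (s k) (t k) := funext hrun
  obtain ⟨Q, -, hQ, hcycle, hconn⟩ := exists_nonCrossing_support Set.univ _
    (fun _ _ => Set.subset_univ _) (axaxFree_image_trace hsort hscf haxK)
  refine ⟨Q, fun k hk => hcycle ?_, hQ, fun K hK hne => ?_⟩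
  · exact IsNextIn.cycleOn_adj ⟨trivial, trivial, hk, fun z _ => not_cyc3_add_one k z⟩
  · exact (SimpleGraph.connected_iff _).2 ⟨hconn _ ⟨K, hK, rfl⟩, hne.to_subtype⟩

theorem stmt14 (n m : ℕ) [NeZero n] [NeZero m] (e : Fin m → Set (Fin n))
    (he : Function.Injective e)
    (s t : Fin m → Fin n) (hrun : ∀ k, e k = arcC (s k) (t k))
    (hsort : ∀ k l : Fin m, k < l →
      lexLe ((s k).val, relpos (t k) (s k)) ((s l).val, relpos (t l) (s l)))
    (hscf : ∀ k l : Fin m, ¬ (0 < relpos (s k) (s l) ∧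
      relpos (s k) (s l) ≤ relpos (t k) (s l) ∧
      relpos (t k) (s l) < relpos (t l) (s l)))
    (𝓚 : Set (Set (Fin n)))
    (haxH : AxaxFree (Set.range e)) (haxK : AxaxFree 𝓚) :
    ∃ Q : SimpleGraph (Fin m),
      (∀ k : Fin m, k ≠ k + 1 → Q.Adj k (k + 1)) ∧
      (∀ a b c d : Fin m, Q.Adj a b → Q.Adj c d → ¬ Cyc4 a c b d) ∧
      ∀ K ∈ 𝓚, {k : Fin m | (e k ∩ K).Nonempty}.Nonempty →
        (Q.induce {k : Fin m | (e k ∩ K).Nonempty}).Connected :=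
  stmt14_general n m e s t hrun hsort hscf 𝓚 haxK
end

section
/- There exists a graph G on 6 vertices arranged on a cycle C = (1,2,3,4,5,6) and a family 𝓗 = {H₁, H₂, H₃, H₄} of subsets of V(C), with H₁ = {1,2,3}, H₂ = {3,4,5}, H₃ = {5,6,1}, H₄ = {2,4,6}, such that (C, 𝓗) is abab-free (no pair H, H' has four vertices a₁, b₁, a₂, b₂ in cyclic order with a₁, a₂ ∈ H \ H' and b₁, b₂ ∈ H' \ H), yet every dual support for (C, 𝓗) — every graph Q* on {H₁,…,H₄} in which for each vertex v the sets containing v induce a connected subgraph — must be the complete graph K₄, which is not outerplanar. -/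
open scoped ENNReal

lemma two_vertex_adj {α : Type*} (G : SimpleGraph α) (a b : α) (hab : a ≠ b)
    (hall : ∀ c, c = a ∨ c = b) (h : G.Reachable a b) : G.Adj a b := by
  obtain ⟨w⟩ := h
  cases w with
  | nil => exact absurd rfl hab
  | cons h' p =>
    rename_i x
    rcases hall x with rfl | rfl
    · exact absurd rfl h'.ne
    · exact h'

instance {n : ℕ} (a b c d : Fin n) : Decidable (Cyc4 a b c d) := by
  unfold Cyc4; infer_instance

def myL : Fin 4 → Finset (Fin 6) := ![{0,1,2}, {2,3,4}, {4,5,0}, {1,3,5}]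

def myHs (i : Fin 4) : Set (Fin 6) := {v | v ∈ myL i}

instance (v : Fin 6) (i : Fin 4) : Decidable (v ∈ myHs i) :=
  inferInstanceAs (Decidable (v ∈ myL i))

lemma myHs_eq : myHs 0 = {0, 1, 2} ∧ myHs 1 = {2, 3, 4} ∧ myHs 2 = {4, 5, 0} ∧
    myHs 3 = {1, 3, 5} := by
  refine ⟨?_, ?_, ?_, ?_⟩ <;> ext v <;> fin_cases v <;>
    simp [myHs, myL, Set.mem_insert_iff, Set.mem_singleton_iff]

lemma key : ∀ i j : Fin 4, i ≠ j →
    ∃ v : Fin 6, v ∈ myHs i ∧ v ∈ myHs j ∧ ∀ k, v ∈ myHs k → k = i ∨ k = j := by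
  decide

theorem stmt18 :
    ∃ Hs : Fin 4 → Set (Fin 6),
      Hs 0 = {0, 1, 2} ∧ Hs 1 = {2, 3, 4} ∧ Hs 2 = {4, 5, 0} ∧ Hs 3 = {1, 3, 5} ∧
      AbabFree (Set.range Hs) ∧
      (∀ Q : SimpleGraph (Fin 4),
        (∀ v : Fin 6, (Q.induce {i : Fin 4 | v ∈ Hs i}).Connected) → Q = ⊤) ∧
      ¬ Outerplanar (⊤ : SimpleGraph (Fin 4)) := by
  obtain ⟨h0, h1, h2, h3⟩ := myHs_eq
  refine ⟨myHs, h0, h1, h2, h3, ?_, ?_, ?_⟩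
  · rintro ⟨H, ⟨i, rfl⟩, H', ⟨j, rfl⟩, a₁, b₁, a₂, b₂, hc, ha1, ha2, hb1, hb2⟩
    simp only [Set.mem_diff] at ha1 ha2 hb1 hb2
    revert hc ha1 ha2 hb1 hb2
    revert a₁ b₁ a₂ b₂
    revert i j
    set_option synthInstance.maxSize 2000 in
    set_option maxHeartbeats 2000000 in
    decide
  · intro Q hQ
    ext i j
    simp only [SimpleGraph.top_adj]
    constructor
    · exact fun h => h.ne
    · intro hij
      obtain ⟨v, hvi, hvj, hvk⟩ := key i j hij
      have hconn := hQ v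
      have ha : (⟨i, hvi⟩ : {k : Fin 4 | v ∈ myHs k}) ≠ ⟨j, hvj⟩ := by
        simp [Subtype.ext_iff, hij]
      have hall : ∀ c : {k : Fin 4 | v ∈ myHs k},
          c = ⟨i, hvi⟩ ∨ c = ⟨j, hvj⟩ := by
        rintro ⟨k, hk⟩
        rcases hvk k hk with rfl | rfl
        · exact Or.inl rfl
        · exact Or.inr rfl
      have := two_vertex_adj _ _ _ ha hall (hconn.preconnected _ _)
      simpa using this
  · rintro ⟨f, hf, hcross⟩
    have hmono : StrictMono (f ∘ Tuple.sort f) :=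
      (Tuple.monotone_sort f).strictMono_of_injective (hf.comp (Tuple.sort f).injective)
    have hvals : f (Tuple.sort f 0) < f (Tuple.sort f 1) ∧
        f (Tuple.sort f 1) < f (Tuple.sort f 2) ∧
        f (Tuple.sort f 2) < f (Tuple.sort f 3) :=
      ⟨hmono (by decide), hmono (by decide), hmono (by decide)⟩
    have h02 : (⊤ : SimpleGraph (Fin 4)).Adj (Tuple.sort f 0) (Tuple.sort f 2) := by
      simp [SimpleGraph.top_adj, (Tuple.sort f).injective.ne_iff]
    have h13 : (⊤ : SimpleGraph (Fin 4)).Adj (Tuple.sort f 1) (Tuple.sort f 3) := by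
      simp [SimpleGraph.top_adj, (Tuple.sort f).injective.ne_iff]
    exact hcross _ _ _ _ h02 h13 ⟨hvals.1, hvals.2.1, hvals.2.2⟩
end
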